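/- Fix an integer n ≥ 1, a wave number k > 0, a ∈ (0,1), C > 0 and L₀ ∈ ℕ. Suppose (z_l)_{l ≥ L₀} are complex numbers with f_n^1(z_l) = 0 and |z_l − z̃¹_{n,l}| ≤ C/l for all l ≥ L₀. Then there exist C′ > 0 and L ≥ L₀ such that for every l ≥ L, sup_{t ∈ [a,1]} |j_n(z_l t)| ≤ (C′/l) · sup_{t ∈ [0,1]} |j_n(z_l t)|; that is, the transverse-electric propagating functions φ¹_{n,l}(k t) = √(n(n+1)) λ_l j_n(z_l t) localize near the origin at rate O(l^{−1}). -/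

import Mathlib

/-!
The zeros `z_l` lie within `C / l` of the real points `z̃¹_{n,l}`, so eventually `Re z_l ≥ l`
and `Im z_l` is small. The three-term recurrence `z j_n + z j_{n+2} = (2n+3) j_{n+1}`, started
from `z j_0 = sin z` and `z² j_1 = sin z - z cos z`, gives `|j_n z| ≤ K e^{|Im z|} / |z|` for
`|z| ≥ 1`, hence `|j_n (z_l t)| = O(1/l)` uniformly for `t ∈ [a, 1]`. On the other hand the
segment `t ↦ z_l t` passes, at `t = 1 / Re z_l`, within `|Im z_l|` of `1`, and `j_n 1 ≠ 0`
(an alternating series with decreasing terms), so by continuity the supremum over `[0, 1]`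
stays bounded away from `0`.
-/

open Complex Real Filter

/-- Spherical Bessel function of the first kind of order `n`, as an entire function. -/
noncomputable def sphJ (n : ℕ) (z : ℂ) : ℂ :=
  ∑' m : ℕ, ((-1 : ℂ) ^ m * z ^ (n + 2 * m)) /
    ((2 : ℂ) ^ m * (m.factorial : ℂ) * (Nat.doubleFactorial (2 * n + 2 * m + 1) : ℂ))

/-- Spherical Hankel function of the first kind of order `n` (for `z ≠ 0`). -/
noncomputable def sphH (n : ℕ) (z : ℂ) : ℂ :=
  (-Complex.I) ^ (n + 1) * Complex.exp (Complex.I * z) / z *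
    ∑ m ∈ Finset.range (n + 1),
      (Complex.I ^ m * ((n + m).factorial : ℂ)) /
        ((m.factorial : ℂ) * (2 * z) ^ m * ((n - m).factorial : ℂ))

/-- `𝒥_n(z) = j_n(z) + z j_n'(z)`. -/
noncomputable def calJ (n : ℕ) (z : ℂ) : ℂ := sphJ n z + z * deriv (sphJ n) z

/-- `ℋ_n(z) = h_n^{(1)}(z) + z (h_n^{(1)})'(z)`. -/
noncomputable def calH (n : ℕ) (z : ℂ) : ℂ := sphH n z + z * deriv (sphH n) z

/-- `f_n^1(z) = h_n^{(1)}(k) 𝒥_n(z) − j_n(z) ℋ_n(k)`. -/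
noncomputable def f1 (n : ℕ) (k : ℝ) (z : ℂ) : ℂ :=
  sphH n (k : ℂ) * calJ n z - sphJ n z * calH n (k : ℂ)

/-- `f_n^2(z) = (k²/z²) h_n^{(1)}(k) 𝒥_n(z) − j_n(z) ℋ_n(k)`. -/
noncomputable def f2 (n : ℕ) (k : ℝ) (z : ℂ) : ℂ :=
  ((k : ℂ) ^ 2 / z ^ 2) * sphH n (k : ℂ) * calJ n z - sphJ n z * calH n (k : ℂ)

/-- `z̃¹_{n,l} = (1 + 2l + n)π/2`. -/
noncomputable def zt1 (n l : ℕ) : ℂ := ((1 + 2 * l + n : ℕ) : ℂ) * (Real.pi : ℂ) / 2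

/-- `z̃²_{n,l} = (2l + n)π/2`. -/
noncomputable def zt2 (n l : ℕ) : ℂ := ((2 * l + n : ℕ) : ℂ) * (Real.pi : ℂ) / 2

/-- `g_n(w) = 𝒥_n(w)/w`, extended through the removable singularity at `w = 0`. -/
noncomputable def gfun (n : ℕ) (w : ℂ) : ℂ :=
  if w = 0 then deriv (calJ n) 0 else calJ n w / w

noncomputable def sphJTerm (n : ℕ) (z : ℂ) (m : ℕ) : ℂ :=
  ((-1 : ℂ) ^ m * z ^ (n + 2 * m)) /
    ((2 : ℂ) ^ m * (m.factorial : ℂ) * (Nat.doubleFactorial (2 * n + 2 * m + 1) : ℂ))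

theorem sphJ_eq_tsum (n : ℕ) (z : ℂ) : sphJ n z = ∑' m, sphJTerm n z m := rfl

theorem norm_sphJTerm_le (n : ℕ) (z : ℂ) (m : ℕ) :
    ‖sphJTerm n z m‖ ≤ ‖z‖ ^ n * ((‖z‖ ^ 2 / 2) ^ m / m.factorial) := by
  have hdf : (1 : ℝ) ≤ (2 * n + 2 * m + 1).doubleFactorial :=
    mod_cast Nat.doubleFactorial_pos _
  calc ‖sphJTerm n z m‖
      = ‖z‖ ^ (n + 2 * m) / (2 ^ m * m.factorial * (2 * n + 2 * m + 1).doubleFactorial) := by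
        simp [sphJTerm]
    _ ≤ ‖z‖ ^ (n + 2 * m) / (2 ^ m * m.factorial * 1) := by gcongr
    _ = ‖z‖ ^ n * ((‖z‖ ^ 2 / 2) ^ m / m.factorial) := by
        rw [mul_one, pow_add, pow_mul, div_pow]; field_simp

theorem summable_sphJTerm (n : ℕ) (z : ℂ) : Summable (sphJTerm n z) :=
  .of_norm_bounded ((Real.summable_pow_div_factorial _).mul_left _) (norm_sphJTerm_le n z)

theorem continuous_sphJ (n : ℕ) : Continuous (sphJ n) := by
  refine continuous_iff_continuousAt.2 fun z₀ => ?_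
  set R := ‖z₀‖ + 1
  have hterm (m : ℕ) : Continuous (sphJTerm n · m) := by unfold sphJTerm; fun_prop
  have hR : ContinuousOn (sphJ n) (Metric.ball 0 R) := by
    refine continuousOn_tsum (fun m => (hterm m).continuousOn)
      ((Real.summable_pow_div_factorial (R ^ 2 / 2)).mul_left (R ^ n)) fun m z hz => ?_
    have hzR : ‖z‖ ≤ R := (mem_ball_zero_iff.1 hz).le
    exact (norm_sphJTerm_le n z m).trans (by gcongr)
  exact hR.continuousAt (Metric.isOpen_ball.mem_nhds (by simp [R]))

theorem sphJTerm_succ_zero (n : ℕ) (z : ℂ) :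
    (2 * n + 3) * sphJTerm (n + 1) z 0 = z * sphJTerm n z 0 := by
  unfold sphJTerm
  rw [show 2 * (n + 1) + 2 * 0 + 1 = (2 * n + 1) + 2 by ring, Nat.doubleFactorial_add_two]
  have : ((2 * n + 1).doubleFactorial : ℂ) ≠ 0 := mod_cast (Nat.doubleFactorial_pos _).ne'
  have : (2 * n + 1 + 2 : ℂ) ≠ 0 := mod_cast (by omega : 2 * n + 1 + 2 ≠ 0)
  push_cast
  field_simp
  ring

theorem sphJTerm_succ_succ (n j : ℕ) (z : ℂ) :
    (2 * n + 3) * sphJTerm (n + 1) z (j + 1) - z * sphJTerm n z (j + 1) =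
      z * sphJTerm (n + 2) z j := by
  unfold sphJTerm
  rw [show 2 * (n + 1) + 2 * (j + 1) + 1 = (2 * n + 2 * j + 3) + 2 by ring,
    show 2 * (n + 2) + 2 * j + 1 = (2 * n + 2 * j + 3) + 2 by ring,
    show 2 * n + 2 * (j + 1) + 1 = 2 * n + 2 * j + 3 by ring,
    Nat.doubleFactorial_add_two, Nat.factorial_succ]
  have : ((2 * n + 2 * j + 3).doubleFactorial : ℂ) ≠ 0 :=
    mod_cast (Nat.doubleFactorial_pos _).ne'
  have : (j.factorial : ℂ) ≠ 0 := mod_cast j.factorial_ne_zero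
  have hq : (2 * n + 2 * j + 3 + 2 : ℂ) ≠ 0 := mod_cast (by omega : 2 * n + 2 * j + 3 + 2 ≠ 0)
  push_cast
  generalize hq' : (2 * n + 2 * j + 3 + 2 : ℂ) = q at hq ⊢
  field_simp
  rw [← hq']
  ring

theorem sphJ_add_two (n : ℕ) (z : ℂ) :
    z * sphJ n z + z * sphJ (n + 2) z = (2 * n + 3) * sphJ (n + 1) z := by
  have h₁ := (summable_sphJTerm (n + 1) z).mul_left (2 * n + 3 : ℂ)
  have h₀ := (summable_sphJTerm n z).mul_left z
  have key : (2 * n + 3) * sphJ (n + 1) z - z * sphJ n z = z * sphJ (n + 2) z := by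
    rw [sphJ_eq_tsum, sphJ_eq_tsum, sphJ_eq_tsum, ← tsum_mul_left, ← tsum_mul_left,
      ← tsum_mul_left, ← h₁.tsum_sub h₀, (h₁.sub h₀).tsum_eq_zero_add, sphJTerm_succ_zero,
      sub_self, zero_add]
    exact tsum_congr (sphJTerm_succ_succ n · z)
  linear_combination -key

theorem factorial_two_mul_add_one (m : ℕ) :
    (2 * m + 1).factorial = 2 ^ m * m.factorial * (2 * m + 1).doubleFactorial := by
  rw [Nat.factorial_eq_mul_doubleFactorial, Nat.doubleFactorial_two_mul]
  ring

theorem mul_sphJ_zero (z : ℂ) : z * sphJ 0 z = Complex.sin z := by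
  rw [sphJ_eq_tsum, ← tsum_mul_left, ← (Complex.hasSum_sin z).tsum_eq]
  refine tsum_congr fun m => ?_
  simp only [sphJTerm, factorial_two_mul_add_one, mul_zero, zero_add]
  push_cast
  ring

theorem sq_mul_sphJ_one (z : ℂ) : z ^ 2 * sphJ 1 z = Complex.sin z - z * Complex.cos z := by
  have h := (Complex.hasSum_sin z).sub ((Complex.hasSum_cos z).mul_left z)
  rw [← h.tsum_eq, h.summable.tsum_eq_zero_add, sphJ_eq_tsum, ← tsum_mul_left]
  simp only [mul_zero, zero_add, pow_zero, Nat.factorial_zero, Nat.factorial_one, Nat.cast_one,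
    pow_one, div_one, one_mul, mul_one, sub_self]
  refine tsum_congr fun j => ?_
  have hodd : (2 * (j + 1) + 1).factorial =
      (2 * j + 3) * (2 * j + 2) * (2 ^ j * j.factorial * (2 * j + 1).doubleFactorial) := by
    rw [← factorial_two_mul_add_one, show 2 * (j + 1) + 1 = (2 * j + 1) + 1 + 1 by ring,
      Nat.factorial_succ, Nat.factorial_succ]
    ring
  have heven : (2 * (j + 1)).factorial =
      (2 * j + 2) * (2 ^ j * j.factorial * (2 * j + 1).doubleFactorial) := by
    rw [← factorial_two_mul_add_one, show 2 * (j + 1) = (2 * j + 1) + 1 by ring,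
      Nat.factorial_succ]
  rw [sphJTerm, show 2 * 1 + 2 * j + 1 = (2 * j + 1) + 2 by ring, Nat.doubleFactorial_add_two,
    hodd, heven]
  have : ((2 * j + 1).doubleFactorial : ℂ) ≠ 0 := mod_cast (Nat.doubleFactorial_pos _).ne'
  have : (j.factorial : ℂ) ≠ 0 := mod_cast j.factorial_ne_zero
  have : (2 * j + 2 : ℂ) ≠ 0 := mod_cast (by omega : 2 * j + 2 ≠ 0)
  have : (2 * j + 3 : ℂ) ≠ 0 := mod_cast (by omega : 2 * j + 3 ≠ 0)
  have : (2 * j + 1 + 2 : ℂ) ≠ 0 := mod_cast (by omega : 2 * j + 1 + 2 ≠ 0)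
  push_cast
  field_simp
  ring

theorem norm_exp_mul_I_le (z : ℂ) : ‖Complex.exp (z * Complex.I)‖ ≤ Real.exp |z.im| := by
  rw [Complex.norm_exp]
  exact Real.exp_le_exp.2 (by simpa using neg_le_abs z.im)

theorem norm_exp_neg_mul_I_le (z : ℂ) : ‖Complex.exp (-z * Complex.I)‖ ≤ Real.exp |z.im| := by
  simpa using norm_exp_mul_I_le (-z)

theorem norm_sin_le_exp_abs_im (z : ℂ) : ‖Complex.sin z‖ ≤ Real.exp |z.im| := by
  rw [Complex.sin, norm_div, norm_mul, Complex.norm_I, mul_one, Complex.norm_two,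
    div_le_iff₀ two_pos]
  linarith [norm_sub_le (Complex.exp (-z * Complex.I)) (Complex.exp (z * Complex.I)),
    norm_exp_mul_I_le z, norm_exp_neg_mul_I_le z]

theorem norm_cos_le_exp_abs_im (z : ℂ) : ‖Complex.cos z‖ ≤ Real.exp |z.im| := by
  rw [Complex.cos, norm_div, Complex.norm_two, div_le_iff₀ two_pos]
  linarith [norm_add_le (Complex.exp (z * Complex.I)) (Complex.exp (-z * Complex.I)),
    norm_exp_mul_I_le z, norm_exp_neg_mul_I_le z]

def HasExpImDecay (f : ℂ → ℂ) : Prop :=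
  ∃ K > 0, ∀ z : ℂ, 1 ≤ ‖z‖ → ‖f z‖ ≤ K * Real.exp |z.im| / ‖z‖

theorem hasExpImDecay_sphJ_zero : HasExpImDecay (sphJ 0) := by
  refine ⟨1, one_pos, fun z hz => ?_⟩
  have hz0 : z ≠ 0 := norm_pos_iff.1 (one_pos.trans_le hz)
  rw [eq_div_of_mul_eq hz0 ((mul_comm _ _).trans (mul_sphJ_zero z)), norm_div, one_mul]
  gcongr
  exact norm_sin_le_exp_abs_im z

theorem hasExpImDecay_sphJ_one : HasExpImDecay (sphJ 1) := by
  refine ⟨2, two_pos, fun z hz => ?_⟩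
  have hz0 : z ≠ 0 := norm_pos_iff.1 (one_pos.trans_le hz)
  have hnum : ‖Complex.sin z - z * Complex.cos z‖ ≤ 2 * Real.exp |z.im| * ‖z‖ := by
    calc ‖Complex.sin z - z * Complex.cos z‖
        ≤ Real.exp |z.im| + ‖z‖ * Real.exp |z.im| := by
          refine (norm_sub_le _ _).trans (add_le_add (norm_sin_le_exp_abs_im z) ?_)
          rw [norm_mul]
          gcongr
          exact norm_cos_le_exp_abs_im z
      _ ≤ 2 * Real.exp |z.im| * ‖z‖ := by nlinarith [Real.exp_pos |z.im|]
  rw [eq_div_of_mul_eq (pow_ne_zero 2 hz0) ((mul_comm _ _).trans (sq_mul_sphJ_one z)),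
    norm_div, norm_pow, div_le_div_iff₀ (by positivity) (by positivity)]
  nlinarith [norm_nonneg z]

theorem HasExpImDecay.sphJ_add_two {n : ℕ} (h₀ : HasExpImDecay (sphJ n))
    (h₁ : HasExpImDecay (sphJ (n + 1))) : HasExpImDecay (sphJ (n + 2)) := by
  obtain ⟨K₀, hK₀, H₀⟩ := h₀
  obtain ⟨K₁, hK₁, H₁⟩ := h₁
  refine ⟨(2 * n + 3) * K₁ + K₀, by positivity, fun z hz => ?_⟩
  have hz0 : z ≠ 0 := norm_pos_iff.1 (one_pos.trans_le hz)
  set E := Real.exp |z.im|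
  have hrec : sphJ (n + 2) z = (2 * n + 3) * sphJ (n + 1) z / z - sphJ n z := by
    field_simp
    linear_combination _root_.sphJ_add_two n z
  have h2n3 : ‖(2 * n + 3 : ℂ)‖ = 2 * n + 3 := mod_cast Complex.norm_natCast (2 * n + 3)
  calc ‖sphJ (n + 2) z‖
      ≤ (2 * n + 3) * ‖sphJ (n + 1) z‖ / ‖z‖ + ‖sphJ n z‖ := by
        rw [hrec, ← h2n3, ← norm_mul, ← norm_div]
        exact norm_sub_le _ _
    -- `1 ≤ ‖z‖` absorbs the extra factor `1 / ‖z‖` in the first term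
    _ ≤ (2 * n + 3) * (K₁ * E / ‖z‖) / 1 + K₀ * E / ‖z‖ := by
        gcongr
        exacts [H₁ z hz, H₀ z hz]
    _ = ((2 * n + 3) * K₁ + K₀) * E / ‖z‖ := by ring

theorem hasExpImDecay_sphJ (n : ℕ) : HasExpImDecay (sphJ n) := by
  induction n using Nat.twoStepInduction with
  | zero => exact hasExpImDecay_sphJ_zero
  | one => exact hasExpImDecay_sphJ_one
  | more n h₀ h₁ => exact h₀.sphJ_add_two h₁

theorem sphJ_one_ne_zero (n : ℕ) : sphJ n 1 ≠ 0 := by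
  set d : ℕ → ℕ := fun m => 2 ^ m * m.factorial * (2 * n + 2 * m + 1).doubleFactorial
  have hd_pos (m : ℕ) : 0 < d m := by positivity
  have hd_succ (m : ℕ) : d (m + 1) = d m * (2 * (m + 1) * (2 * n + 2 * m + 3)) := by
    simp only [d, show 2 * n + 2 * (m + 1) + 1 = (2 * n + 2 * m + 1) + 2 by ring,
      Nat.doubleFactorial_add_two, Nat.factorial_succ, pow_succ]
    ring
  set b : ℕ → ℝ := fun m => 1 / d m
  have hterm (m : ℕ) : sphJTerm n 1 m = (((-1) ^ m * b m : ℝ) : ℂ) := by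
    simp [sphJTerm, b, d, div_eq_mul_inv]
  have hb_anti : Antitone b := antitone_nat_of_succ_le fun m => by
    simp only [b, hd_succ]
    gcongr
    exact Nat.le_mul_of_pos_right _ (by positivity)
  have hb_lt : b 1 < b 0 := by
    simp only [b, hd_succ 0]
    gcongr
    exact lt_mul_of_one_lt_right (hd_pos 0) (by omega)
  have hb_summable : Summable b := by
    refine (summable_sphJTerm n 1).norm.congr fun m => ?_
    simp [hterm, b]
  have herr := alternating_series_error_bound b hb_anti hb_summable 1
  simp only [Finset.range_one, Finset.sum_singleton, pow_zero, one_mul] at herr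
  rw [sphJ_eq_tsum, tsum_congr hterm, ← Complex.ofReal_tsum, Complex.ofReal_ne_zero]
  linarith [neg_abs_le (∑' m, (-1) ^ m * b m - b 0)]

theorem exists_le_sSup_norm_comp_mul {f : ℂ → ℂ} (hf : Continuous f) (h1 : f 1 ≠ 0) :
    ∃ c > 0, ∃ δ > 0, ∀ w : ℂ, 1 ≤ w.re → |w.im| < δ →
      c ≤ sSup ((fun t : ℝ => ‖f (w * t)‖) '' Set.Icc 0 1) := by
  obtain ⟨δ, hδ, hball⟩ :=
    Metric.continuousAt_iff.1 hf.continuousAt (‖f 1‖ / 2) (by positivity)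
  refine ⟨‖f 1‖ / 2, by positivity, δ, hδ, fun w hre him => ?_⟩
  have hbdd : BddAbove ((fun t : ℝ => ‖f (w * t)‖) '' Set.Icc 0 1) :=
    (isCompact_Icc.image (by fun_prop)).bddAbove
  have hre0 : 0 < w.re := one_pos.trans_le hre
  have hsub : w * ((1 / w.re : ℝ) : ℂ) - 1 = ((w.im / w.re : ℝ) : ℂ) * Complex.I := by
    apply Complex.ext <;> simp [hre0.ne', div_eq_mul_inv]
  have hdist : dist (w * ((1 / w.re : ℝ) : ℂ)) 1 < δ := by
    rw [dist_eq_norm, hsub, norm_mul, Complex.norm_I, mul_one, Complex.norm_real,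
      Real.norm_eq_abs, abs_div, abs_of_pos hre0]
    exact (div_le_self (abs_nonneg _) hre).trans_lt him
  have hclose := hball hdist
  rw [dist_eq_norm] at hclose
  calc ‖f 1‖ / 2 ≤ ‖f (w * ((1 / w.re : ℝ) : ℂ))‖ := by
        linarith [norm_sub_norm_le (f 1) (f (w * ((1 / w.re : ℝ) : ℂ))),
          norm_sub_rev (f 1) (f (w * ((1 / w.re : ℝ) : ℂ)))]
    _ ≤ _ := le_csSup hbdd ⟨1 / w.re, ⟨by positivity, (div_le_one hre0).2 hre⟩, rfl⟩

theorem HasExpImDecay.exists_sSup_norm_comp_mul_le {f : ℂ → ℂ} (hf : HasExpImDecay f) :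
    ∃ K > 0, ∀ a > 0, ∀ w : ℂ, 1 ≤ a * ‖w‖ → |w.im| ≤ 1 →
      sSup ((fun t : ℝ => ‖f (w * t)‖) '' Set.Icc a 1) ≤ K / (a * ‖w‖) := by
  obtain ⟨K, hK, hdecay⟩ := hf
  refine ⟨K * Real.exp 1, by positivity, fun a ha w hw him => ?_⟩
  refine Real.sSup_le (fun _ ⟨t, ⟨hat, _⟩, hft⟩ => ?_) (by positivity)
  have ht : 0 < t := ha.trans_le hat
  have hwt : ‖w * t‖ = ‖w‖ * t := by
    rw [norm_mul, Complex.norm_real, Real.norm_of_nonneg ht.le]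
  have hawt : a * ‖w‖ ≤ ‖w * t‖ := by rw [hwt, mul_comm]; gcongr
  have him_t : |(w * t).im| ≤ 1 := by
    rw [Complex.mul_im, Complex.ofReal_re, Complex.ofReal_im, mul_zero, zero_add, abs_mul,
      abs_of_pos ht]
    nlinarith [abs_nonneg w.im]
  rw [← hft]
  calc ‖f (w * t)‖ ≤ K * Real.exp |(w * t).im| / ‖w * t‖ := hdecay _ (hw.trans hawt)
    _ ≤ K * Real.exp 1 / (a * ‖w‖) := by gcongr

theorem zt1_im (n l : ℕ) : (zt1 n l).im = 0 := by simp [zt1]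

theorem add_one_le_zt1_re (n l : ℕ) : (l : ℝ) + 1 ≤ (zt1 n l).re := by
  have hre : (zt1 n l).re = (1 + 2 * l + n) * π / 2 := by simp [zt1]
  rw [hre]
  nlinarith [Real.pi_gt_three, (n.cast_nonneg : (0 : ℝ) ≤ n), (l.cast_nonneg : (0 : ℝ) ≤ l)]

theorem eventually_le_re_and_abs_im_lt (n : ℕ) {C ε : ℝ} (hε : 0 < ε) {z : ℕ → ℂ}
    (hz : ∀ᶠ l in atTop, ‖z l - zt1 n l‖ ≤ C / l) :
    ∀ᶠ l : ℕ in atTop, (l : ℝ) ≤ (z l).re ∧ |(z l).im| < ε := by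
  have hsmall : ∀ᶠ l : ℕ in atTop, C / l < min ε 1 :=
    (tendsto_const_div_atTop_nhds_zero_nat C).eventually_lt_const (lt_min hε one_pos)
  filter_upwards [hz, hsmall] with l hl hCl
  have hnear : ‖z l - zt1 n l‖ < min ε 1 := hl.trans_lt hCl
  constructor
  · have := (abs_le.1 (Complex.abs_re_le_norm (z l - zt1 n l))).1
    rw [Complex.sub_re] at this
    linarith [add_one_le_zt1_re n l, min_le_right ε 1]
  · have := Complex.abs_im_le_norm (z l - zt1 n l)
    rw [Complex.sub_im, zt1_im, sub_zero] at this
    linarith [min_le_left ε 1]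

theorem stmt9_general (n : ℕ) (k : ℝ) (a : ℝ) (ha : a ∈ Set.Ioo (0 : ℝ) 1)
    (C : ℝ) (L₀ : ℕ) (z : ℕ → ℂ)
    (hz : ∀ l : ℕ, L₀ ≤ l → f1 n k (z l) = 0 ∧ ‖z l - zt1 n l‖ ≤ C / l) :
    ∃ C' > (0 : ℝ), ∃ L : ℕ, L₀ ≤ L ∧ ∀ l : ℕ, L ≤ l →
      sSup ((fun t : ℝ => ‖sphJ n (z l * (t : ℂ))‖) '' Set.Icc a 1) ≤
        (C' / l) * sSup ((fun t : ℝ => ‖sphJ n (z l * (t : ℂ))‖) '' Set.Icc 0 1) := by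
  obtain ⟨ha0, ha1⟩ := ha
  obtain ⟨K, hK, hupper⟩ := (hasExpImDecay_sphJ n).exists_sSup_norm_comp_mul_le
  obtain ⟨c, hc, δ, hδ, hlower⟩ :=
    exists_le_sSup_norm_comp_mul (continuous_sphJ n) (sphJ_one_ne_zero n)
  have hnear : ∀ᶠ l in atTop, ‖z l - zt1 n l‖ ≤ C / l :=
    eventually_atTop.2 ⟨L₀, fun l hl => (hz l hl).2⟩
  obtain ⟨L, hL⟩ := eventually_atTop.1 <|
    (eventually_le_re_and_abs_im_lt n (lt_min hδ one_pos) hnear).and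
      (tendsto_natCast_atTop_atTop.eventually_ge_atTop (1 / a))
  refine ⟨K / (a * c), by positivity, max L L₀, le_max_right _ _, fun l hLl => ?_⟩
  obtain ⟨⟨hre, him⟩, hla⟩ := hL l (le_of_max_le_left hLl)
  have hal : 1 ≤ a * l := by rwa [div_le_iff₀' ha0] at hla
  have hl : 1 ≤ (l : ℝ) := by nlinarith
  have hnorm : (l : ℝ) ≤ ‖z l‖ := hre.trans (Complex.re_le_norm _)
  calc _ ≤ K / (a * ‖z l‖) :=
        hupper a ha0 (z l) (hal.trans (by gcongr)) (him.le.trans (min_le_right _ _))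
    _ ≤ K / (a * l) := by gcongr
    _ = K / (a * c) / l * c := by field_simp
    _ ≤ _ := by
        exact mul_le_mul_of_nonneg_left
          (hlower (z l) (hl.trans hre) (him.trans_le (min_le_left _ _))) (by positivity)

/-- localization of the TE propagating functions near the origin. -/
theorem stmt9 (n : ℕ) (hn : 1 ≤ n) (k : ℝ) (hk : 0 < k) (a : ℝ) (ha : a ∈ Set.Ioo (0 : ℝ) 1)
    (C : ℝ) (hC : 0 < C) (L₀ : ℕ) (z : ℕ → ℂ)
    (hz : ∀ l : ℕ, L₀ ≤ l → f1 n k (z l) = 0 ∧ ‖z l - zt1 n l‖ ≤ C / l) :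
    ∃ C' > (0 : ℝ), ∃ L : ℕ, L₀ ≤ L ∧ ∀ l : ℕ, L ≤ l →
      sSup ((fun t : ℝ => ‖sphJ n (z l * (t : ℂ))‖) '' Set.Icc a 1) ≤
        (C' / l) * sSup ((fun t : ℝ => ‖sphJ n (z l * (t : ℂ))‖) '' Set.Icc 0 1) :=
  stmt9_general n k a ha C L₀ z hz
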